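/- arXiv:cs/0507033 — 3 statements merged into one kernel-verified Lean document; each statement's English description precedes it below -/
import Mathlib

section
/- Let K : P_0^D → ℝ be defined by downward recursion on levels: K_T := k(μ_T, μ'_T) for T ∈ P_D, and K_T := (1 − ε_T)·k(μ_T, μ'_T) + ε_T·∏_{U ∈ s(T)} K_U for T ∈ P_d with d < D. Then the multiresolution kernel value factorizes as ∑_{P ∈ 𝒫_D} π(P) · ∏_{T ∈ P} k(μ_T, μ'_T) = K_𝒯. -/
open Finset

/-- `P` is a partition of the finite type `𝒯`: its blocks are nonempty and every
element of `𝒯` belongs to exactly one block. -/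
def IsPartitionOn {𝒯 : Type*} [Fintype 𝒯] [DecidableEq 𝒯] (P : Finset (Finset 𝒯)) : Prop :=
  (∀ T ∈ P, T.Nonempty) ∧ ∀ t : 𝒯, ∃! T, T ∈ P ∧ t ∈ T

/-- A hierarchy of depth `D` on the finite type `𝒯`: a sequence of partitions
`P_0, ..., P_D` of `𝒯` such that `P_0 = {𝒯}`, `P_D = {{t} : t ∈ 𝒯}`, and for each
`d < D` and each block `T ∈ P_d`, the set `s(T)` of blocks of `P_{d+1}` included in `T`
is a partition of `T` different from `{T}`. -/
structure Hierarchy (𝒯 : Type*) [Fintype 𝒯] [DecidableEq 𝒯] (D : ℕ) where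
  part : ℕ → Finset (Finset 𝒯)
  isPartition : ∀ d ≤ D, IsPartitionOn (part d)
  part_zero : part 0 = {(Finset.univ : Finset 𝒯)}
  part_last : part D = Finset.univ.image fun t : 𝒯 => ({t} : Finset 𝒯)
  sibling_cover : ∀ d < D, ∀ T ∈ part d, ∀ t ∈ T, ∃ U ∈ part (d + 1), U ⊆ T ∧ t ∈ U
  sibling_ne : ∀ d < D, ∀ T ∈ part d, (part (d + 1)).filter (· ⊆ T) ≠ {T}

namespace Hierarchy

variable {𝒯 : Type*} [Fintype 𝒯] [DecidableEq 𝒯] {D : ℕ}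

/-- The siblings `s(T)` of a block `T ∈ P_d`: the blocks of `P_{d+1}` included in `T`. -/
def siblings (H : Hierarchy 𝒯 D) (d : ℕ) (T : Finset 𝒯) : Finset (Finset 𝒯) :=
  (H.part (d + 1)).filter (· ⊆ T)

/-- The family `P_0^D = ⋃_{d=0}^D P_d` of all sets appearing in the hierarchy. -/
def levels (H : Hierarchy 𝒯 D) : Finset (Finset 𝒯) :=
  (Finset.range (D + 1)).biUnion H.part

open Classical in
/-- The collection `𝒫_D` of all partitions of `𝒯` whose blocks all belong to `P_0^D`. -/
noncomputable def parts (H : Hierarchy 𝒯 D) : Finset (Finset (Finset 𝒯)) :=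
  H.levels.powerset.filter IsPartitionOn

open Classical in
/-- The ancestors `P° = {T ∈ P_0^D : ∃ V ∈ P, V ⊊ T}` of a partition `P`. -/
noncomputable def ancestors (H : Hierarchy 𝒯 D) (P : Finset (Finset 𝒯)) :
    Finset (Finset 𝒯) :=
  H.levels.filter fun T => ∃ V ∈ P, V ⊂ T

/-- The branching-process weight `π(P) = ∏_{T ∈ P} (1 - ε_T) · ∏_{T ∈ P°} ε_T`. -/
noncomputable def weight (H : Hierarchy 𝒯 D) (ε : Finset 𝒯 → ℝ)
    (P : Finset (Finset 𝒯)) : ℝ :=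
  (∏ T ∈ P, (1 - ε T)) * ∏ T ∈ H.ancestors P, ε T

end Hierarchy

/-! For a block `T`, let `Σ_T` be the sum over partitions of `T` into hierarchy blocks of
`∏_V (1 - ε_V) k(μ_V, μ'_V)` times the product of `ε_W` over the ancestors `W ⊆ T` of the
partition. A partition of `T` is either `{T}`, contributing `(1 - ε_T) k(μ_T, μ'_T)`, or, the
hierarchy being laminar, the disjoint union of arbitrary partitions of the children
`U ∈ s(T)`; then `T` is one more ancestor and the term factors over the children, so by
distributivity these partitions contribute `ε_T ∏_{U ∈ s(T)} Σ_U`. Hence `T ↦ Σ_T` obeys the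
recursion defining `K`, and `Σ_𝒯` is the left-hand side. -/

namespace Hierarchy

variable {𝒯 : Type*} [Fintype 𝒯] [DecidableEq 𝒯] {D : ℕ} (H : Hierarchy 𝒯 D)
  {d : ℕ} {T U U' V W : Finset 𝒯} {t : 𝒯}

theorem eq_of_mem_part (hd : d ≤ D) (hV : V ∈ H.part d) (hW : W ∈ H.part d)
    (htV : t ∈ V) (htW : t ∈ W) : V = W :=
  ((H.isPartition d hd).2 t).unique ⟨hV, htV⟩ ⟨hW, htW⟩

theorem exists_mem_part (hd : d ≤ D) (t : 𝒯) : ∃ V ∈ H.part d, t ∈ V := by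
  obtain ⟨V, hV, -⟩ := (H.isPartition d hd).2 t
  exact ⟨V, hV⟩

theorem nonempty_of_mem_part (hd : d ≤ D) (hV : V ∈ H.part d) : V.Nonempty :=
  (H.isPartition d hd).1 V hV

theorem subset_of_mem_part_of_le {a b : ℕ} (hab : a ≤ b) (hb : b ≤ D)
    (hV : V ∈ H.part b) (hW : W ∈ H.part a) (htV : t ∈ V) (htW : t ∈ W) : V ⊆ W := by
  induction b, hab using Nat.le_induction generalizing V with
  | base => exact (H.eq_of_mem_part hb hV hW htV htW).le
  | succ b hab ih =>
    obtain ⟨V', hV', htV'⟩ := H.exists_mem_part (d := b) (by omega) t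
    obtain ⟨U, hU, hUV', htU⟩ := H.sibling_cover b (by omega) V' hV' t htV'
    obtain rfl := H.eq_of_mem_part hb hU hV htU htV
    exact hUV'.trans (ih (by omega) hV' htV')

theorem mem_levels : V ∈ H.levels ↔ ∃ e ≤ D, V ∈ H.part e := by
  simp only [levels, mem_biUnion, mem_range, Nat.lt_succ_iff]

theorem nonempty_of_mem_levels (hV : V ∈ H.levels) : V.Nonempty := by
  obtain ⟨e, he, hVe⟩ := H.mem_levels.1 hV
  exact H.nonempty_of_mem_part he hVe

theorem notMem_part_succ (hd : d < D) (hT : T ∈ H.part d) : T ∉ H.part (d + 1) := by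
  intro hT'
  refine H.sibling_ne d hd T hT (eq_singleton_iff_unique_mem.2 ⟨mem_filter.2 ⟨hT', le_rfl⟩, ?_⟩)
  rintro U hU
  obtain ⟨hU, hUT⟩ := mem_filter.1 hU
  obtain ⟨t, ht⟩ := H.nonempty_of_mem_part hd hU
  exact H.eq_of_mem_part hd hU hT' ht (hUT ht)

@[simp]
theorem mem_siblings : U ∈ H.siblings d T ↔ U ∈ H.part (d + 1) ∧ U ⊆ T :=
  mem_filter

theorem ssubset_of_mem_siblings (hd : d < D) (hT : T ∈ H.part d) (hU : U ∈ H.siblings d T) :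
    U ⊂ T := by
  obtain ⟨hU, hUT⟩ := H.mem_siblings.1 hU
  exact ssubset_of_subset_of_ne hUT fun h => H.notMem_part_succ hd hT (h ▸ hU)

theorem eq_of_mem_siblings (hd : d < D) (hU : U ∈ H.siblings d T) (hU' : U' ∈ H.siblings d T)
    (htU : t ∈ U) (htU' : t ∈ U') : U = U' :=
  H.eq_of_mem_part hd (H.mem_siblings.1 hU).1 (H.mem_siblings.1 hU').1 htU htU'

theorem exists_mem_siblings (hd : d < D) (hT : T ∈ H.part d) (ht : t ∈ T) :
    ∃ U ∈ H.siblings d T, t ∈ U := by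
  obtain ⟨U, hU, hUT, htU⟩ := H.sibling_cover d hd T hT t ht
  exact ⟨U, H.mem_siblings.2 ⟨hU, hUT⟩, htU⟩

theorem exists_mem_siblings_superset (hd : d < D) (hT : T ∈ H.part d) (hV : V ∈ H.levels)
    (hVT : V ⊂ T) : ∃ U ∈ H.siblings d T, V ⊆ U := by
  obtain ⟨e, he, hVe⟩ := H.mem_levels.1 hV
  obtain ⟨t, htV⟩ := H.nonempty_of_mem_levels hV
  have htT := hVT.subset htV
  obtain ⟨U, hU, htU⟩ := H.exists_mem_siblings hd hT htT
  rcases le_or_gt e d with hed | hde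
  · exact absurd (H.subset_of_mem_part_of_le hed hd.le hT hVe htT htV) hVT.not_subset
  · exact ⟨U, hU, H.subset_of_mem_part_of_le hde he hVe (H.mem_siblings.1 hU).1 htV htU⟩

theorem prod_eq_prod_siblings {β : Type*} [CommMonoid β] (hd : d < D) (hT : T ∈ H.part d)
    {A : Finset (Finset 𝒯)} (hA : ∀ V ∈ A, V ∈ H.levels ∧ V ⊂ T) (f : Finset 𝒯 → β) :
    ∏ V ∈ A, f V = ∏ U ∈ H.siblings d T, ∏ V ∈ A with V ⊆ U, f V := by
  have hcover : A = (H.siblings d T).biUnion fun U => {V ∈ A | V ⊆ U} := by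
    ext V
    simp only [mem_biUnion, mem_filter]
    refine ⟨fun hV => ?_, fun ⟨_, _, hV, _⟩ => hV⟩
    obtain ⟨U, hU, hVU⟩ := H.exists_mem_siblings_superset hd hT (hA V hV).1 (hA V hV).2
    exact ⟨U, hU, hV, hVU⟩
  have hdisj : (H.siblings d T : Set (Finset 𝒯)).PairwiseDisjoint
      fun U => {V ∈ A | V ⊆ U} := by
    intro U hU U' hU' hne
    refine disjoint_left.2 fun V hV hV' => hne ?_
    obtain ⟨hV, hVU⟩ := mem_filter.1 hV
    obtain ⟨t, ht⟩ := H.nonempty_of_mem_levels (hA V hV).1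
    exact H.eq_of_mem_siblings hd hU hU' (hVU ht) ((mem_filter.1 hV').2 ht)
  conv_lhs => rw [hcover]
  exact prod_biUnion hdisj

open Classical in
noncomputable def partsIn (T : Finset 𝒯) : Finset (Finset (Finset 𝒯)) :=
  H.levels.powerset.filter fun P => (∀ V ∈ P, V ⊆ T) ∧ ∀ t ∈ T, ∃! V, V ∈ P ∧ t ∈ V

theorem mem_partsIn {P : Finset (Finset 𝒯)} :
    P ∈ H.partsIn T ↔ P ⊆ H.levels ∧ (∀ V ∈ P, V ⊆ T) ∧ ∀ t ∈ T, ∃! V, V ∈ P ∧ t ∈ V := by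
  simp only [partsIn, mem_filter, mem_powerset]

theorem singleton_mem_partsIn (hT : T ∈ H.levels) : {T} ∈ H.partsIn T := by
  refine H.mem_partsIn.2 ⟨singleton_subset_iff.2 hT, by simp, fun t ht => ⟨T, by simp [ht], ?_⟩⟩
  simp

theorem ssubset_of_mem_partsIn {P : Finset (Finset 𝒯)} (hP : P ∈ H.partsIn T) (hPT : P ≠ {T})
    (hV : V ∈ P) : V ⊂ T := by
  obtain ⟨hlev, hsub, huniq⟩ := H.mem_partsIn.1 hP
  refine ssubset_of_subset_of_ne (hsub V hV) ?_
  rintro rfl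
  refine hPT (eq_singleton_iff_unique_mem.2 ⟨hV, fun W hW => ?_⟩)
  obtain ⟨t, ht⟩ := H.nonempty_of_mem_levels (hlev hW)
  exact (huniq t (hsub W hW ht)).unique ⟨hW, ht⟩ ⟨hV, hsub W hW ht⟩

theorem partsIn_of_mem_part_last (hT : T ∈ H.part D) : H.partsIn T = {{T}} := by
  have hTlev : T ∈ H.levels := H.mem_levels.2 ⟨D, le_rfl, hT⟩
  refine eq_singleton_iff_unique_mem.2 ⟨H.singleton_mem_partsIn hTlev, fun P hP => ?_⟩
  by_contra hne
  obtain ⟨t, -, rfl⟩ := mem_image.1 (H.part_last ▸ hT)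
  obtain ⟨V, ⟨hV, htV⟩, -⟩ := (H.mem_partsIn.1 hP).2.2 t (mem_singleton_self t)
  exact (H.ssubset_of_mem_partsIn hP hne hV).not_subset (singleton_subset_iff.2 htV)

open Classical in
noncomputable def ancestorsIn (T : Finset 𝒯) (P : Finset (Finset 𝒯)) : Finset (Finset 𝒯) :=
  H.levels.filter fun W => W ⊆ T ∧ ∃ V ∈ P, V ⊂ W

theorem mem_ancestorsIn {P : Finset (Finset 𝒯)} :
    W ∈ H.ancestorsIn T P ↔ W ∈ H.levels ∧ W ⊆ T ∧ ∃ V ∈ P, V ⊂ W := by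
  simp only [ancestorsIn, mem_filter]

theorem ancestorsIn_singleton_self : H.ancestorsIn T {T} = ∅ := by
  refine eq_empty_of_forall_notMem fun W hW => ?_
  obtain ⟨-, hWT, V, hV, hVW⟩ := H.mem_ancestorsIn.1 hW
  rw [mem_singleton.1 hV] at hVW
  exact hVW.not_subset hWT

theorem ancestorsIn_filter_subset (P : Finset (Finset 𝒯)) :
    H.ancestorsIn U {V ∈ P | V ⊆ U} = H.ancestorsIn U P := by
  ext W
  simp only [mem_ancestorsIn, mem_filter]
  exact ⟨fun ⟨hW, hWU, V, ⟨hV, _⟩, hVW⟩ => ⟨hW, hWU, V, hV, hVW⟩,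
    fun ⟨hW, hWU, V, hV, hVW⟩ => ⟨hW, hWU, V, ⟨hV, hVW.subset.trans hWU⟩, hVW⟩⟩

theorem filter_subset_erase_ancestorsIn (P : Finset (Finset 𝒯)) (hUT : U ⊂ T) :
    {W ∈ (H.ancestorsIn T P).erase T | W ⊆ U} = H.ancestorsIn U P := by
  ext W
  simp only [mem_filter, mem_erase, mem_ancestorsIn]
  constructor
  · rintro ⟨⟨-, hW, -, hanc⟩, hWU⟩
    exact ⟨hW, hWU, hanc⟩
  · rintro ⟨hW, hWU, hanc⟩
    refine ⟨⟨?_, hW, hWU.trans hUT.subset, hanc⟩, hWU⟩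
    rintro rfl
    exact hUT.not_subset hWU

theorem self_mem_ancestorsIn {P : Finset (Finset 𝒯)} (hT : T ∈ H.levels)
    (hP : P ∈ H.partsIn T) (hPT : P ≠ {T}) : T ∈ H.ancestorsIn T P := by
  obtain ⟨t, ht⟩ := H.nonempty_of_mem_levels hT
  obtain ⟨V, ⟨hV, -⟩, -⟩ := (H.mem_partsIn.1 hP).2.2 t ht
  exact H.mem_ancestorsIn.2 ⟨hT, subset_rfl, V, hV, H.ssubset_of_mem_partsIn hP hPT hV⟩

theorem filter_subset_mem_partsIn (hd : d < D) (hT : T ∈ H.part d) {P : Finset (Finset 𝒯)}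
    (hP : P ∈ H.partsIn T) (hPT : P ≠ {T}) (hU : U ∈ H.siblings d T) :
    {V ∈ P | V ⊆ U} ∈ H.partsIn U := by
  obtain ⟨hlev, -, huniq⟩ := H.mem_partsIn.1 hP
  refine H.mem_partsIn.2 ⟨(filter_subset _ _).trans hlev, fun V hV => (mem_filter.1 hV).2,
    fun t ht => ?_⟩
  obtain ⟨V, ⟨hV, htV⟩, hVuniq⟩ := huniq t ((H.mem_siblings.1 hU).2 ht)
  obtain ⟨U', hU', hVU'⟩ := H.exists_mem_siblings_superset hd hT (hlev hV)
    (H.ssubset_of_mem_partsIn hP hPT hV)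
  obtain rfl := H.eq_of_mem_siblings hd hU' hU (hVU' htV) ht
  exact ⟨V, ⟨mem_filter.2 ⟨hV, hVU'⟩, htV⟩,
    fun W ⟨hW, htW⟩ => hVuniq W ⟨(mem_filter.1 hW).1, htW⟩⟩

theorem biUnion_mem_partsIn (hd : d < D) (hT : T ∈ H.part d)
    {p : ∀ U ∈ H.siblings d T, Finset (Finset 𝒯)} (hp : ∀ U hU, p U hU ∈ H.partsIn U) :
    (H.siblings d T).attach.biUnion (fun U => p U.1 U.2) ∈ (H.partsIn T).erase {T} := by
  have hmem {V : Finset 𝒯} :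
      V ∈ (H.siblings d T).attach.biUnion (fun U => p U.1 U.2) ↔ ∃ U hU, V ∈ p U hU := by
    simp
  refine mem_erase.2 ⟨fun h => ?_, H.mem_partsIn.2 ⟨fun V hV => ?_, fun V hV => ?_, fun t ht => ?_⟩⟩
  · obtain ⟨U, hU, hTU⟩ := hmem.1 (by rw [h]; exact mem_singleton_self T)
    exact (H.ssubset_of_mem_siblings hd hT hU).not_subset
      ((H.mem_partsIn.1 (hp U hU)).2.1 T hTU)
  · obtain ⟨U, hU, hV⟩ := hmem.1 hV
    exact (H.mem_partsIn.1 (hp U hU)).1 hV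
  · obtain ⟨U, hU, hV⟩ := hmem.1 hV
    exact ((H.mem_partsIn.1 (hp U hU)).2.1 V hV).trans (H.mem_siblings.1 hU).2
  · obtain ⟨U, hU, htU⟩ := H.exists_mem_siblings hd hT ht
    obtain ⟨V, ⟨hV, htV⟩, hVuniq⟩ := (H.mem_partsIn.1 (hp U hU)).2.2 t htU
    refine ⟨V, ⟨hmem.2 ⟨U, hU, hV⟩, htV⟩, fun W ⟨hW, htW⟩ => ?_⟩
    obtain ⟨U', hU', hW⟩ := hmem.1 hW
    obtain rfl := H.eq_of_mem_siblings hd hU' hU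
      ((H.mem_partsIn.1 (hp U' hU')).2.1 W hW htW) htU
    exact hVuniq W ⟨hW, htW⟩

theorem biUnion_filter_subset_siblings (hd : d < D) (hT : T ∈ H.part d)
    {P : Finset (Finset 𝒯)} (hP : P ∈ H.partsIn T) (hPT : P ≠ {T}) :
    (H.siblings d T).attach.biUnion (fun U => {V ∈ P | V ⊆ U.1}) = P := by
  ext V
  simp only [mem_biUnion, mem_attach, true_and, mem_filter, Subtype.exists]
  refine ⟨fun ⟨_, _, hV, _⟩ => hV, fun hV => ?_⟩
  obtain ⟨U, hU, hVU⟩ := H.exists_mem_siblings_superset hd hT ((H.mem_partsIn.1 hP).1 hV)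
    (H.ssubset_of_mem_partsIn hP hPT hV)
  exact ⟨U, hU, hV, hVU⟩

theorem filter_subset_biUnion (hd : d < D) {p : ∀ U ∈ H.siblings d T, Finset (Finset 𝒯)}
    (hp : ∀ U hU, p U hU ∈ H.partsIn U) (hU : U ∈ H.siblings d T) :
    {V ∈ (H.siblings d T).attach.biUnion (fun U => p U.1 U.2) | V ⊆ U} = p U hU := by
  ext V
  simp only [mem_filter, mem_biUnion, mem_attach, true_and, Subtype.exists]
  constructor
  · rintro ⟨⟨U', hU', hV⟩, hVU⟩
    obtain ⟨hlev, hsub, -⟩ := H.mem_partsIn.1 (hp U' hU')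
    obtain ⟨t, ht⟩ := H.nonempty_of_mem_levels (hlev hV)
    obtain rfl := H.eq_of_mem_siblings hd hU' hU (hsub V hV ht) (hVU ht)
    exact hV
  · exact fun hV => ⟨⟨U, hU, hV⟩, (H.mem_partsIn.1 (hp U hU)).2.1 V hV⟩

variable (ε κ : Finset 𝒯 → ℝ)

noncomputable def kernelTerm (T : Finset 𝒯) (P : Finset (Finset 𝒯)) : ℝ :=
  (∏ V ∈ P, (1 - ε V) * κ V) * ∏ W ∈ H.ancestorsIn T P, ε W

noncomputable def kernelSum (T : Finset 𝒯) : ℝ :=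
  ∑ P ∈ H.partsIn T, H.kernelTerm ε κ T P

theorem kernelTerm_singleton_self : H.kernelTerm ε κ T {T} = (1 - ε T) * κ T := by
  rw [kernelTerm, ancestorsIn_singleton_self, prod_empty, prod_singleton, mul_one]

theorem kernelSum_of_mem_part_last (hT : T ∈ H.part D) :
    H.kernelSum ε κ T = (1 - ε T) * κ T := by
  rw [kernelSum, H.partsIn_of_mem_part_last hT, sum_singleton, kernelTerm_singleton_self]


theorem kernelTerm_eq_mul_prod_siblings (hd : d < D) (hT : T ∈ H.part d)
    {P : Finset (Finset 𝒯)} (hP : P ∈ H.partsIn T) (hPT : P ≠ {T}) :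
    H.kernelTerm ε κ T P = ε T * ∏ U ∈ H.siblings d T, H.kernelTerm ε κ U {V ∈ P | V ⊆ U} := by
  have hTlev : T ∈ H.levels := H.mem_levels.2 ⟨d, hd.le, hT⟩
  have hblocks : ∀ V ∈ P, V ∈ H.levels ∧ V ⊂ T :=
    fun V hV => ⟨(H.mem_partsIn.1 hP).1 hV, H.ssubset_of_mem_partsIn hP hPT hV⟩
  have hancestors : ∀ W ∈ (H.ancestorsIn T P).erase T, W ∈ H.levels ∧ W ⊂ T := by
    intro W hW
    obtain ⟨hWT, hW⟩ := mem_erase.1 hW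
    obtain ⟨hWlev, hWsub, -⟩ := H.mem_ancestorsIn.1 hW
    exact ⟨hWlev, ssubset_of_subset_of_ne hWsub hWT⟩
  have hsplit : ∏ W ∈ (H.ancestorsIn T P).erase T, ε W
      = ∏ U ∈ H.siblings d T, ∏ W ∈ H.ancestorsIn U P, ε W := by
    rw [H.prod_eq_prod_siblings hd hT hancestors]
    refine prod_congr rfl fun U hU => ?_
    rw [H.filter_subset_erase_ancestorsIn P (H.ssubset_of_mem_siblings hd hT hU)]
  simp only [kernelTerm, ancestorsIn_filter_subset]
  rw [← mul_prod_erase _ _ (H.self_mem_ancestorsIn hTlev hP hPT), hsplit,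
    H.prod_eq_prod_siblings hd hT hblocks, prod_mul_distrib]
  ring

theorem kernelSum_eq_of_lt (hd : d < D) (hT : T ∈ H.part d) :
    H.kernelSum ε κ T = (1 - ε T) * κ T + ε T * ∏ U ∈ H.siblings d T, H.kernelSum ε κ U := by
  have hTlev : T ∈ H.levels := H.mem_levels.2 ⟨d, hd.le, hT⟩
  rw [kernelSum, ← add_sum_erase _ _ (H.singleton_mem_partsIn hTlev), kernelTerm_singleton_self]
  congr 1
  simp only [kernelSum]
  rw [prod_sum, mul_sum]
  refine sum_nbij' (fun P U _ => {V ∈ P | V ⊆ U})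
    (fun p => (H.siblings d T).attach.biUnion fun U => p U.1 U.2) ?_ ?_ ?_ ?_ ?_
  · intro P hP
    obtain ⟨hPT, hP⟩ := mem_erase.1 hP
    exact mem_pi.2 fun U hU => H.filter_subset_mem_partsIn hd hT hP hPT hU
  · exact fun p hp => H.biUnion_mem_partsIn hd hT (mem_pi.1 hp)
  · intro P hP
    obtain ⟨hPT, hP⟩ := mem_erase.1 hP
    exact H.biUnion_filter_subset_siblings hd hT hP hPT
  · intro p hp
    funext U hU
    exact H.filter_subset_biUnion hd (mem_pi.1 hp) hU
  · intro P hP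
    obtain ⟨hPT, hP⟩ := mem_erase.1 hP
    rw [H.kernelTerm_eq_mul_prod_siblings ε κ hd hT hP hPT]
    exact congrArg _ (prod_attach _ _).symm

theorem kernelSum_eq_of_rec {K : Finset 𝒯 → ℝ} (hεD : ∀ T ∈ H.part D, ε T = 0)
    (hK_last : ∀ T ∈ H.part D, K T = κ T)
    (hK_rec : ∀ d < D, ∀ T ∈ H.part d,
      K T = (1 - ε T) * κ T + ε T * ∏ U ∈ H.siblings d T, K U)
    (hd : d ≤ D) : ∀ T ∈ H.part d, H.kernelSum ε κ T = K T := by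
  induction hd using Nat.decreasingInduction with
  | self =>
    intro T hT
    rw [H.kernelSum_of_mem_part_last ε κ hT, hεD T hT, hK_last T hT, sub_zero, one_mul]
  | of_succ d hd ih =>
    intro T hT
    rw [H.kernelSum_eq_of_lt ε κ hd hT, hK_rec d hd T hT,
      prod_congr rfl fun U hU => ih U (H.mem_siblings.1 hU).1]

theorem parts_eq_partsIn_univ : H.parts = H.partsIn univ := by
  ext P
  simp only [parts, IsPartitionOn, mem_filter, mem_powerset, mem_partsIn, subset_univ,
    implies_true, mem_univ, forall_const, true_and]
  exact ⟨fun ⟨hlev, _, huniq⟩ => ⟨hlev, huniq⟩,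
    fun ⟨hlev, huniq⟩ => ⟨hlev, fun V hV => H.nonempty_of_mem_levels (hlev hV), huniq⟩⟩

theorem weight_mul_prod_eq_kernelTerm_univ (P : Finset (Finset 𝒯)) :
    H.weight ε P * ∏ V ∈ P, κ V = H.kernelTerm ε κ univ P := by
  have hancestors : H.ancestors P = H.ancestorsIn univ P := by
    ext W
    simp only [ancestors, mem_filter, mem_ancestorsIn, subset_univ, true_and]
  rw [weight, kernelTerm, hancestors, prod_mul_distrib]
  ring

end Hierarchy

theorem multiresolution_factorization_general
    {𝒯 : Type*} [Fintype 𝒯] [DecidableEq 𝒯] {D : ℕ}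
    (H : Hierarchy 𝒯 D) {M : Type*} [AddCommMonoid M]
    (k : M → M → ℝ) (μ μ' : 𝒯 → M) (ε : Finset 𝒯 → ℝ)
    (hεD : ∀ T ∈ H.part D, ε T = 0)
    (K : Finset 𝒯 → ℝ)
    (hK_last : ∀ T ∈ H.part D, K T = k (∑ t ∈ T, μ t) (∑ t ∈ T, μ' t))
    (hK_rec : ∀ d < D, ∀ T ∈ H.part d,
      K T = (1 - ε T) * k (∑ t ∈ T, μ t) (∑ t ∈ T, μ' t)
          + ε T * ∏ U ∈ H.siblings d T, K U) :
    ∑ P ∈ H.parts, H.weight ε P * ∏ T ∈ P, k (∑ t ∈ T, μ t) (∑ t ∈ T, μ' t)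
      = K Finset.univ := by
  have huniv : (univ : Finset 𝒯) ∈ H.part 0 := H.part_zero ▸ mem_singleton_self univ
  rw [H.parts_eq_partsIn_univ]
  simp only [H.weight_mul_prod_eq_kernelTerm_univ]
  exact H.kernelSum_eq_of_rec ε (fun T => k (∑ t ∈ T, μ t) (∑ t ∈ T, μ' t)) hεD hK_last hK_rec
    (Nat.zero_le D) univ huniv

/-- **Factorization of the multiresolution kernel.**
If `K : P_0^D → ℝ` is defined by downward recursion on the levels of the hierarchy, by
`K_T = k(μ_T, μ'_T)` for `T ∈ P_D` and
`K_T = (1 - ε_T)·k(μ_T, μ'_T) + ε_T·∏_{U ∈ s(T)} K_U` for `T ∈ P_d` with `d < D`,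
then `∑_{P ∈ 𝒫_D} π(P) · ∏_{T ∈ P} k(μ_T, μ'_T) = K_𝒯`. -/
theorem multiresolution_factorization
    {𝒯 : Type*} [Fintype 𝒯] [DecidableEq 𝒯] [Nonempty 𝒯] {D : ℕ}
    (H : Hierarchy 𝒯 D) {M : Type*} [AddCommMonoid M]
    (k : M → M → ℝ) (μ μ' : 𝒯 → M) (ε : Finset 𝒯 → ℝ)
    (hε01 : ∀ T ∈ H.levels, 0 ≤ ε T ∧ ε T ≤ 1)
    (hεD : ∀ T ∈ H.part D, ε T = 0)
    (K : Finset 𝒯 → ℝ)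
    (hK_last : ∀ T ∈ H.part D, K T = k (∑ t ∈ T, μ t) (∑ t ∈ T, μ' t))
    (hK_rec : ∀ d < D, ∀ T ∈ H.part d,
      K T = (1 - ε T) * k (∑ t ∈ T, μ t) (∑ t ∈ T, μ' t)
          + ε T * ∏ U ∈ H.siblings d T, K U) :
    ∑ P ∈ H.parts, H.weight ε P * ∏ T ∈ P, k (∑ t ∈ T, μ t) (∑ t ∈ T, μ' t)
      = K Finset.univ :=
  multiresolution_factorization_general H k μ μ' ε hεD K hK_last hK_rec
end

section
/- If k is a positive definite kernel on the commutative additive monoid M, then the multiresolution kernel k_π(μ, μ') := ∑_{P ∈ 𝒫_D} π(P) · ∏_{T ∈ P} k(μ_T, μ'_T) is a positive definite kernel on the set of maps μ : 𝒯 → M. -/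
open Finset

/-- `k` is a positive definite kernel on `X`: it is symmetric and every Gram matrix it
generates is positive semidefinite. -/
def IsPosDefKernel {X : Type*} (k : X → X → ℝ) : Prop :=
  (∀ x y, k x y = k y x) ∧
  ∀ (m : ℕ) (x : Fin m → X) (c : Fin m → ℝ),
    0 ≤ ∑ i, ∑ j, c i * c j * k (x i) (x j)

/-!
Each summand `∏_{T ∈ P} k(μ_T, μ'_T)` is a product of pullbacks of `k` along `μ ↦ μ_T`,
hence positive definite by the Schur product theorem. The weights `π(P)` are nonnegative
because `ε` takes values in `[0, 1]`, and a nonnegative combination of positive definite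
kernels is positive definite.
-/

open Matrix

namespace IsPosDefKernel

variable {X : Type*} {k k' : X → X → ℝ}

lemma quadForm_eq_sum {m : ℕ} (x : Fin m → X) (c : Fin m → ℝ) :
    star c ⬝ᵥ (of (fun i j => k (x i) (x j)) *ᵥ c) = ∑ i, ∑ j, c i * c j * k (x i) (x j) := by
  simp only [dotProduct, mulVec, of_apply, Pi.star_apply, star_trivial, Finset.mul_sum]
  exact Finset.sum_congr rfl fun i _ => Finset.sum_congr rfl fun j _ => by ring

theorem iff_posSemidef : IsPosDefKernel k ↔
    (∀ x y, k x y = k y x) ∧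
      ∀ (m : ℕ) (x : Fin m → X), (of fun i j => k (x i) (x j)).PosSemidef := by
  refine and_congr_right fun hsym => forall_congr' fun m => ?_
  refine ⟨fun h x => .of_dotProduct_mulVec_nonneg ?_ fun c => ?_, fun h x c => ?_⟩
  · ext i j
    simp [hsym]
  · rw [quadForm_eq_sum]
    exact h x c
  · rw [← quadForm_eq_sum]
    exact (h x).dotProduct_mulVec_nonneg c

theorem comp {Y : Type*} (hk : IsPosDefKernel k) (f : Y → X) :
    IsPosDefKernel fun a b => k (f a) (f b) :=
  ⟨fun a b => hk.1 (f a) (f b), fun m x c => hk.2 m (f ∘ x) c⟩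

theorem one : IsPosDefKernel fun _ _ : X => (1 : ℝ) := by
  refine ⟨fun _ _ => rfl, fun m x c => ?_⟩
  simpa only [mul_one, Finset.sum_mul_sum] using mul_self_nonneg (∑ i, c i)

theorem mul (hk : IsPosDefKernel k) (hk' : IsPosDefKernel k') :
    IsPosDefKernel fun x y => k x y * k' x y := by
  rw [iff_posSemidef] at hk hk' ⊢
  exact ⟨fun x y => by rw [hk.1, hk'.1], fun m x => (hk.2 m x).hadamard (hk'.2 m x)⟩

theorem prod {ι : Type*} (s : Finset ι) {k : ι → X → X → ℝ}
    (hk : ∀ i ∈ s, IsPosDefKernel (k i)) : IsPosDefKernel fun x y => ∏ i ∈ s, k i x y := by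
  induction s using Finset.cons_induction with
  | empty => simpa only [Finset.prod_empty] using one
  | cons i s hi ih =>
    simp only [Finset.prod_cons]
    exact (hk i (s.mem_cons_self i)).mul (ih fun j hj => hk j (Finset.mem_cons_of_mem hj))

theorem sum {ι : Type*} (s : Finset ι) {w : ι → ℝ} {k : ι → X → X → ℝ}
    (hw : ∀ i ∈ s, 0 ≤ w i) (hk : ∀ i ∈ s, IsPosDefKernel (k i)) :
    IsPosDefKernel fun x y => ∑ i ∈ s, w i * k i x y := by
  refine ⟨fun x y => Finset.sum_congr rfl fun i hi => by rw [(hk i hi).1], fun m x c => ?_⟩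
  calc 0 ≤ ∑ i ∈ s, w i * ∑ a, ∑ b, c a * c b * k i (x a) (x b) :=
        Finset.sum_nonneg fun i hi => mul_nonneg (hw i hi) ((hk i hi).2 m x c)
    _ = ∑ a, ∑ b, c a * c b * ∑ i ∈ s, w i * k i (x a) (x b) := by
        simp only [Finset.mul_sum]
        rw [Finset.sum_comm]
        refine Finset.sum_congr rfl fun a _ => ?_
        rw [Finset.sum_comm]
        exact Finset.sum_congr rfl fun b _ => Finset.sum_congr rfl fun i _ => by ring

end IsPosDefKernel

namespace Hierarchy

variable {𝒯 : Type*} [Fintype 𝒯] [DecidableEq 𝒯] {D : ℕ} (H : Hierarchy 𝒯 D)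

lemma subset_levels_of_mem_parts {P : Finset (Finset 𝒯)} (hP : P ∈ H.parts) :
    P ⊆ H.levels := by
  classical
  exact Finset.mem_powerset.mp (Finset.mem_filter.mp hP).1

lemma weight_nonneg {ε : Finset 𝒯 → ℝ} (hε : ∀ T ∈ H.levels, 0 ≤ ε T ∧ ε T ≤ 1)
    {P : Finset (Finset 𝒯)} (hP : P ⊆ H.levels) : 0 ≤ H.weight ε P := by
  refine mul_nonneg (Finset.prod_nonneg fun T hT => ?_) (Finset.prod_nonneg fun T hT => ?_)
  · exact sub_nonneg.mpr (hε T (hP hT)).2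
  · exact (hε T (Finset.mem_filter.mp hT).1).1

end Hierarchy

theorem isPosDefKernel_multiresolution_general
    {𝒯 : Type*} [Fintype 𝒯] [DecidableEq 𝒯] {D : ℕ}
    (H : Hierarchy 𝒯 D) {M : Type*} [AddCommMonoid M]
    (ε : Finset 𝒯 → ℝ)
    (hε01 : ∀ T ∈ H.levels, 0 ≤ ε T ∧ ε T ≤ 1)
    (k : M → M → ℝ) (hk : IsPosDefKernel k) :
    IsPosDefKernel fun μ μ' : 𝒯 → M =>
      ∑ P ∈ H.parts, H.weight ε P * ∏ T ∈ P, k (∑ t ∈ T, μ t) (∑ t ∈ T, μ' t) := by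
  refine IsPosDefKernel.sum (X := 𝒯 → M) H.parts (w := H.weight ε)
    (k := fun P μ μ' => ∏ T ∈ P, k (∑ t ∈ T, μ t) (∑ t ∈ T, μ' t))
    (fun P hP => H.weight_nonneg hε01 (H.subset_levels_of_mem_parts hP)) fun P _ => ?_
  exact IsPosDefKernel.prod P fun T _ => hk.comp fun μ : 𝒯 → M => ∑ t ∈ T, μ t

/-- **The multiresolution kernel is positive definite:** if `k` is a positive definite
kernel on the commutative additive monoid `M`, then
`k_π(μ, μ') := ∑_{P ∈ 𝒫_D} π(P) · ∏_{T ∈ P} k(μ_T, μ'_T)` is a positive definite kernel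
on the set of maps `μ : 𝒯 → M`. -/
theorem isPosDefKernel_multiresolution
    {𝒯 : Type*} [Fintype 𝒯] [DecidableEq 𝒯] [Nonempty 𝒯] {D : ℕ}
    (H : Hierarchy 𝒯 D) {M : Type*} [AddCommMonoid M]
    (ε : Finset 𝒯 → ℝ)
    (hε01 : ∀ T ∈ H.levels, 0 ≤ ε T ∧ ε T ≤ 1)
    (hεD : ∀ T ∈ H.part D, ε T = 0)
    (k : M → M → ℝ) (hk : IsPosDefKernel k) :
    IsPosDefKernel fun μ μ' : 𝒯 → M =>
      ∑ P ∈ H.parts, H.weight ε P * ∏ T ∈ P, k (∑ t ∈ T, μ t) (∑ t ∈ T, μ' t) :=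
  isPosDefKernel_multiresolution_general H ε hε01 k hk
end

section
/- Dobinski's formula: for every r ≥ 1, the Bell number B_r equals (1/e) ∑_{u=0}^∞ u^r / u! (equivalently, since the u = 0 term vanishes for r ≥ 1, B_r = (1/e) ∑_{u=1}^∞ u^r / u!). -/
/-- The Bell number `B r`: the number of partitions of a set with `r` elements, i.e.
the number of partitions of `Fin r` into nonempty pairwise disjoint blocks covering
`Fin r`. -/
noncomputable def bellNumber (r : ℕ) : ℕ :=
  Nat.card (Finpartition (Finset.univ : Finset (Fin r)))

/-!
Removing `a` together with its block from a partition of `insert a s` leaves a partition of the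
rest, so partitions of an `(n+1)`-set satisfy `B (n+1) = ∑ i ≤ n, (n choose i) * B (n - i)`, the
recursion defining `Nat.bell`. The series `T n = ∑' u, u ^ n / u!` satisfies the same recursion,
because `(u+1)^(n+1) / (u+1)! = (u+1)^n / u!` expands by the binomial theorem, and `T 0 = e`.
Hence `T n = e * B n`.
-/

open Finset
open scoped Nat

namespace Finpartition

variable {α : Type*} [DecidableEq α] {a : α} {s t : Finset α}

lemma parts_avoid_of_mem (P : Finpartition s) (ht : t ∈ P.parts) :
    (P.avoid t).parts = P.parts.erase t := by
  ext c
  rw [mem_avoid, mem_erase]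
  constructor
  · rintro ⟨d, hd, hdt, rfl⟩
    have hne : d ≠ t := by rintro rfl; exact hdt le_rfl
    have hdis : Disjoint d t := P.disjoint hd ht hne
    rw [Finset.sdiff_eq_self_iff_disjoint.2 hdis]
    exact ⟨hne, hd⟩
  · rintro ⟨hne, hc⟩
    have hdis : Disjoint c t := P.disjoint hc ht hne
    refine ⟨c, hc, fun hle => hne ?_, Finset.sdiff_eq_self_iff_disjoint.2 hdis⟩
    obtain ⟨x, hx⟩ := P.nonempty_of_mem_parts hc
    exact P.eq_of_mem_parts hc ht hx (hle hx)

def insertBlock (ha : a ∉ s) (ht : t ⊆ s) (Q : Finpartition (s \ t)) :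
    Finpartition (insert a s) :=
  Q.extend (b := insert a t) (insert_ne_empty a t)
    (disjoint_left.2 fun _ _ _ => by grind)
    (by ext; simp only [sup_eq_union, mem_union, mem_sdiff, mem_insert]; grind)

lemma parts_insertBlock (ha : a ∉ s) (ht : t ⊆ s) (Q : Finpartition (s \ t)) :
    (insertBlock ha ht Q).parts = insert (insert a t) Q.parts := rfl

lemma part_insertBlock (ha : a ∉ s) (ht : t ⊆ s) (Q : Finpartition (s \ t)) :
    (insertBlock ha ht Q).part a = insert a t :=
  part_eq_of_mem _ (by rw [parts_insertBlock]; exact mem_insert_self _ _) (mem_insert_self a t)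

lemma insert_notMem_parts (ha : a ∉ s) (Q : Finpartition (s \ t)) : insert a t ∉ Q.parts :=
  fun h => ha (mem_sdiff.1 (Q.le h (mem_insert_self a t))).1

lemma erase_part_subset (P : Finpartition (insert a s)) : (P.part a).erase a ⊆ s := by
  intro x hx
  rw [mem_erase] at hx
  exact (mem_insert.1 (P.part_subset a hx.2)).resolve_left hx.1

lemma insert_sdiff_part (ha : a ∉ s) (P : Finpartition (insert a s)) :
    insert a s \ P.part a = s \ (P.part a).erase a := by
  have := P.mem_part_self.2 (mem_insert_self a s)
  ext x; simp only [mem_sdiff, mem_insert, mem_erase]; grind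

def insertEquivSigma (ha : a ∉ s) :
    Finpartition (insert a s) ≃ Σ t : s.powerset, Finpartition (s \ t.1) where
  toFun P := ⟨⟨(P.part a).erase a, mem_powerset.2 (erase_part_subset P)⟩,
    (P.avoid (P.part a)).copy (insert_sdiff_part ha P)⟩
  invFun x := insertBlock ha (mem_powerset.1 x.1.2) x.2
  left_inv P := by
    have hmem := P.part_mem.2 (mem_insert_self a s)
    ext1
    rw [parts_insertBlock, insert_erase (P.mem_part_self.2 (mem_insert_self a s))]
    exact (congrArg _ (parts_avoid_of_mem P hmem)).trans (insert_erase hmem)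
  right_inv := by
    rintro ⟨⟨t, ht⟩, Q⟩
    set P := insertBlock ha (mem_powerset.1 ht) Q
    have hpart : P.part a = insert a t := part_insertBlock ha _ Q
    have hat : a ∉ t := fun h => ha (mem_powerset.1 ht h)
    suffices ∀ (t' : s.powerset) (Q' : Finpartition (s \ t'.1)),
        t'.1 = t → Q'.parts = Q.parts →
        (⟨t', Q'⟩ : Σ t : s.powerset, Finpartition (s \ t.1)) = ⟨⟨t, ht⟩, Q⟩ by
      refine this _ _ ((congrArg (fun u => u.erase a) hpart).trans (erase_insert hat)) ?_
      change (P.avoid (P.part a)).parts = _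
      rw [parts_avoid_of_mem _ (P.part_mem.2 (mem_insert_self a s)), hpart, parts_insertBlock,
        erase_insert (insert_notMem_parts ha Q)]
    rintro ⟨t', ht'⟩ Q' rfl hQ
    rw [Finpartition.ext hQ]

theorem card_insert (ha : a ∉ s) :
    Nat.card (Finpartition (insert a s)) =
      ∑ t ∈ s.powerset, Nat.card (Finpartition (s \ t)) := by
  rw [Nat.card_congr (insertEquivSigma ha), Nat.card_sigma,
    sum_coe_sort s.powerset fun t => Nat.card (Finpartition (s \ t))]

theorem card_eq_bell (s : Finset α) : Nat.card (Finpartition s) = (#s).bell := by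
  induction s using strongInduction with
  | H s ih =>
    obtain rfl | ⟨a, has⟩ := s.eq_empty_or_nonempty
    · rw [card_empty, Nat.bell_zero, ← bot_eq_empty, Nat.card_unique]
    rw [← insert_erase has, card_insert (notMem_erase a s),
      card_insert_of_notMem (notMem_erase a s), Nat.bell_succ]
    have hcard (t : Finset α) (ht : t ∈ (s.erase a).powerset) :
        Nat.card (Finpartition (s.erase a \ t)) = (#(s.erase a) - #t).bell := by
      rw [ih _ (sdiff_subset.trans_ssubset (erase_ssubset has)),
        card_sdiff_of_subset (mem_powerset.1 ht)]
    rw [sum_congr rfl hcard, sum_powerset_apply_card (fun m => (#(s.erase a) - m).bell),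
      Nat.range_succ_eq_Iic]
    simp only [smul_eq_mul]

end Finpartition

lemma succ_pow_succ_div_factorial_succ (n u : ℕ) :
    ((u + 1 : ℕ) : ℝ) ^ (n + 1) / (u + 1)! =
      ∑ i ∈ Iic n, n.choose i * ((u : ℝ) ^ (n - i) / u !) := by
  have hu : ((u + 1 : ℕ) : ℝ) ≠ 0 := by positivity
  rw [Nat.factorial_succ, Nat.cast_mul, pow_succ', mul_div_mul_left _ _ hu, Nat.cast_succ,
    add_comm, add_pow, ← Nat.range_succ_eq_Iic, sum_div]
  refine sum_congr rfl fun i _ => ?_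
  rw [one_pow, one_mul]
  ring

lemma summable_natCast_pow_div_factorial (n : ℕ) :
    Summable fun u : ℕ => (u : ℝ) ^ n / u ! := by
  induction n using Nat.strong_induction_on with
  | _ n ih =>
    cases n with
    | zero => simpa using Real.summable_pow_div_factorial 1
    | succ n =>
      refine (summable_nat_add_iff 1).1 ?_
      simp only [succ_pow_succ_div_factorial_succ]
      exact summable_sum fun i hi => (ih _ (by omega)).mul_left _

lemma tsum_natCast_pow_succ_div_factorial (n : ℕ) :
    ∑' u : ℕ, (u : ℝ) ^ (n + 1) / u ! =
      ∑ i ∈ Iic n, n.choose i * ∑' u : ℕ, (u : ℝ) ^ (n - i) / u ! := by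
  rw [(summable_natCast_pow_div_factorial _).tsum_eq_zero_add]
  simp only [succ_pow_succ_div_factorial_succ, Nat.cast_zero, zero_pow n.succ_ne_zero, zero_div,
    zero_add]
  rw [Summable.tsum_finsetSum fun i _ => (summable_natCast_pow_div_factorial _).mul_left _]
  simp only [tsum_mul_left]

lemma tsum_natCast_pow_div_factorial (n : ℕ) :
    ∑' u : ℕ, (u : ℝ) ^ n / u ! = Real.exp 1 * n.bell := by
  induction n using Nat.strong_induction_on with
  | _ n ih =>
    cases n with
    | zero =>
      simp [Real.exp_eq_exp_ℝ, NormedSpace.exp_eq_tsum_div]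
    | succ n =>
      rw [tsum_natCast_pow_succ_div_factorial, Nat.bell_succ, Nat.cast_sum, mul_sum]
      refine sum_congr rfl fun i hi => ?_
      rw [ih _ (by omega)]
      push_cast
      ring

theorem dobinski_general (r : ℕ) :
    (bellNumber r : ℝ)
      = (1 / Real.exp 1) * ∑' u : ℕ, (u : ℝ) ^ r / (Nat.factorial u) := by
  rw [tsum_natCast_pow_div_factorial, bellNumber, Finpartition.card_eq_bell, card_univ,
    Fintype.card_fin]
  field_simp

/-- **Dobinski's formula:** for every `r ≥ 1`, the Bell number `B_r` equals
`(1/e) ∑_{u=0}^∞ u^r / u!`. -/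
theorem dobinski (r : ℕ) (hr : 1 ≤ r) :
    (bellNumber r : ℝ)
      = (1 / Real.exp 1) * ∑' u : ℕ, (u : ℝ) ^ r / (Nat.factorial u) :=
  dobinski_general r
end
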